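/- For all natural numbers i ≥ 1 and n with n ≥ α_i, one has (n/α_i)^{n/α_i} / ⌊n/α_i⌋^{⌊n/α_i⌋} < (10·n/α_i)^{(α_i − 1)/α_i} (as real numbers). -/

import Mathlib

/-!
Write `x = n/α` and `q = ⌊x⌋`. Splitting `x^x = x^q · x^(x-q)` and using `(x/q)^q ≤ e^(x-q)`
gives `x^x / q^q ≤ (e x)^(x-q)`. The fractional part `x - q = (n mod α)/α` is at most
`(α-1)/α`, and `e < 10`.
-/

/-- Auxiliary: `alphaAux i` is `α_{i+1}`, with `α_1 = 2` and
`α_{i+1} = α_i² - α_i + 1`. -/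
def alphaAux : ℕ → ℕ
  | 0 => 2
  | i + 1 => alphaAux i ^ 2 - alphaAux i + 1

/-- The sequence `α_1 = 2, α_2 = 3, α_3 = 7, α_4 = 43, ...`, indexed from `1`. -/
def alphaSeq (i : ℕ) : ℕ := alphaAux (i - 1)

lemma two_le_alphaAux (k : ℕ) : 2 ≤ alphaAux k := by
  induction k with
  | zero => exact le_rfl
  | succ k ih =>
    have : 2 * alphaAux k ≤ alphaAux k ^ 2 := by rw [sq]; exact Nat.mul_le_mul_right _ ih
    change 2 ≤ alphaAux k ^ 2 - alphaAux k + 1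
    omega

lemma two_le_alphaSeq (i : ℕ) : 2 ≤ alphaSeq i := two_le_alphaAux _

namespace Real

lemma div_natCast_pow_le_exp_sub {x : ℝ} (hx : 0 ≤ x) {q : ℕ} (hq : 0 < q) :
    (x / q) ^ q ≤ exp (x - q) := by
  have hq' : (q : ℝ) ≠ 0 := by positivity
  convert one_sub_div_pow_le_exp_neg (n := q) (t := q - x) (by linarith) using 2
  · field_simp; ring
  · ring

lemma rpow_self_div_pow_le {x : ℝ} {q : ℕ} (hq : 0 < q) (hqx : (q : ℝ) ≤ x) :
    x ^ x / (q : ℝ) ^ q ≤ (exp 1 * x) ^ (x - q) := by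
  have hx : 0 < x := lt_of_lt_of_le (by exact_mod_cast hq) hqx
  have hsplit : x ^ x = x ^ q * x ^ (x - q) := by
    rw [← rpow_natCast, ← rpow_add hx, add_sub_cancel]
  calc x ^ x / (q : ℝ) ^ q = (x / q) ^ q * x ^ (x - q) := by rw [hsplit, div_pow]; ring
    _ ≤ exp (x - q) * x ^ (x - q) := by
      gcongr; exact div_natCast_pow_le_exp_sub hx.le hq
    _ = (exp 1 * x) ^ (x - q) := by
      rw [mul_rpow (exp_pos 1).le hx.le, exp_one_rpow]

end Real

lemma Nat.cast_div_sub_cast_div_le (n : ℕ) {a : ℕ} (ha : 0 < a) :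
    (n : ℝ) / a - ((n / a : ℕ) : ℝ) ≤ ((a : ℝ) - 1) / a := by
  have ha' : (0 : ℝ) < a := by exact_mod_cast ha
  have hmod : ((n % a : ℕ) : ℝ) ≤ (a : ℝ) - 1 := by
    have : n % a + 1 ≤ a := Nat.mod_lt n ha
    have : ((n % a : ℕ) : ℝ) + 1 ≤ a := by exact_mod_cast this
    linarith
  have hn : (n : ℝ) = a * ((n / a : ℕ) : ℝ) + ((n % a : ℕ) : ℝ) := by
    exact_mod_cast (Nat.div_add_mod n a).symm
  calc (n : ℝ) / a - ((n / a : ℕ) : ℝ) = ((n % a : ℕ) : ℝ) / a := by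
        rw [hn]; field_simp; ring
    _ ≤ ((a : ℝ) - 1) / a := by gcongr

open Real in
theorem analysis_ineq_general (i n : ℕ) (hn : alphaSeq i ≤ n) :
    ((n : ℝ) / (alphaSeq i : ℝ)) ^ ((n : ℝ) / (alphaSeq i : ℝ)) /
        ((n / alphaSeq i : ℕ) : ℝ) ^ (n / alphaSeq i : ℕ)
      < (10 * (n : ℝ) / (alphaSeq i : ℝ)) ^ (((alphaSeq i : ℝ) - 1) / (alphaSeq i : ℝ)) := by
  set a := alphaSeq i
  have ha₂ : 2 ≤ a := two_le_alphaSeq i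
  have ha₀ : 0 < a := by omega
  have ha : (2 : ℝ) ≤ a := by exact_mod_cast ha₂
  have hq : 0 < n / a := Nat.div_pos hn ha₀
  have hqx : ((n / a : ℕ) : ℝ) ≤ (n : ℝ) / a := Nat.cast_div_le
  have hx : 1 ≤ (n : ℝ) / a := le_trans (by exact_mod_cast hq) hqx
  have hexp : 0 < ((a : ℝ) - 1) / a := by apply div_pos <;> linarith
  calc ((n : ℝ) / a) ^ ((n : ℝ) / a) / ((n / a : ℕ) : ℝ) ^ (n / a)
      ≤ (exp 1 * (n / a)) ^ ((n : ℝ) / a - (n / a : ℕ)) := rpow_self_div_pow_le hq hqx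
    _ ≤ (exp 1 * (n / a)) ^ (((a : ℝ) - 1) / a) := by
      apply rpow_le_rpow_of_exponent_le _ (Nat.cast_div_sub_cast_div_le n ha₀)
      nlinarith [one_le_exp zero_le_one]
    _ < (10 * n / a) ^ (((a : ℝ) - 1) / a) := by
      rw [mul_div_assoc]
      gcongr
      exact exp_one_lt_d9.trans (by norm_num)

open Real in
/-- For `i ≥ 1` and `n ≥ α_i`,
`(n/α_i)^(n/α_i) / ⌊n/α_i⌋^⌊n/α_i⌋ < (10 n / α_i)^((α_i - 1)/α_i)`. -/
theorem analysis_ineq (i n : ℕ) (hi : 1 ≤ i) (hn : alphaSeq i ≤ n) :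
    ((n : ℝ) / (alphaSeq i : ℝ)) ^ ((n : ℝ) / (alphaSeq i : ℝ)) /
        ((n / alphaSeq i : ℕ) : ℝ) ^ (n / alphaSeq i : ℕ)
      < (10 * (n : ℝ) / (alphaSeq i : ℝ)) ^ (((alphaSeq i : ℝ) - 1) / (alphaSeq i : ℝ)) :=
  analysis_ineq_general i n hn
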